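/- Let $r \in (2,3)$ and let $u \in H^1(\mathbb{T}^3)$ with Littlewood–Paley blocks $u_q$, $\lambda_q = 2^q$, and $\nu > 0$, $c_r > 0$. Define $\Lambda_{u,r} = \min\{\lambda_q : \lambda_p^{-1+3/r}\|u_p\|_{L^r} < c_r \nu\ \forall p > q, \text{ and } \lambda_q^{-1}\|u_{\le q}\|_{L^\infty} < c_r \nu\}$ (with $\min \emptyset := \infty$). Then $\Lambda_{u,r}$ is finite; in fact $\Lambda_{u,r} \le C_r \nu^{-2}\|u\|_{H^1}^2 + \lambda_0$ for a constant $C_r$ depending only on $r$ and $c_r$. -/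

import Mathlib

open MeasureTheory

/-- The fundamental domain `[0, 2π]³` of the torus `𝕋³`. -/
def torusBox : Set (Fin 3 → ℝ) := Set.univ.pi fun _ => Set.Icc 0 (2 * Real.pi)

/-- The character `e_k(x) = e^{i k·x}`. -/
noncomputable def ek (k : Fin 3 → ℤ) (x : Fin 3 → ℝ) : ℂ :=
  Complex.exp (Complex.I * ((∑ i, (k i : ℝ) * x i : ℝ) : ℂ))

/-- An integer frequency vector viewed as a point of Euclidean space `ℝ³`. -/
noncomputable def kr (k : Fin 3 → ℤ) : EuclideanSpace ℝ (Fin 3) :=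
  (WithLp.equiv 2 (Fin 3 → ℝ)).symm fun i => (k i : ℝ)

/-- The Littlewood–Paley multiplier `φ_q` (with `φ_{-1} = χ`). -/
noncomputable def Phi (χ : EuclideanSpace ℝ (Fin 3) → ℝ) (q : ℤ)
    (ξ : EuclideanSpace ℝ (Fin 3)) : ℝ :=
  if q = -1 then χ ξ else χ ((2 : ℝ) ^ (-q - 1) • ξ) - χ ((2 : ℝ) ^ (-q) • ξ)

/-- A finite set of frequencies containing the support of `φ_q` (`q ≥ -1`). -/
noncomputable def Kset (q : ℤ) : Finset (Fin 3 → ℤ) :=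
  Finset.Icc (fun _ => -(2 ^ (q + 1).toNat : ℤ)) fun _ => (2 ^ (q + 1).toNat : ℤ)

/-- The Littlewood–Paley block `u_q = Δ_q u` of the function with Fourier coefficients `c`. -/
noncomputable def ublock (χ : EuclideanSpace ℝ (Fin 3) → ℝ) (c : (Fin 3 → ℤ) → ℂ)
    (q : ℤ) : (Fin 3 → ℝ) → ℂ :=
  fun x => ∑ k ∈ Kset q, (Phi χ q (kr k) : ℂ) * c k * ek k x

/-- The `L^r` norm on the torus `𝕋³ = [0,2π]³`. -/
noncomputable def LrNorm (r : ℝ) (u : (Fin 3 → ℝ) → ℂ) : ℝ :=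
  (∫ y in torusBox, ‖u y‖ ^ r) ^ (1 / r)

/-- The `L^∞` norm (sup norm) of a continuous periodic function. -/
noncomputable def LinfNorm (u : (Fin 3 → ℝ) → ℂ) : ℝ := ⨆ x, ‖u x‖

namespace S18

lemma ek_continuous (k : Fin 3 → ℤ) : Continuous (ek k) := by
  unfold ek; fun_prop

lemma ek_norm (k : Fin 3 → ℤ) (x : Fin 3 → ℝ) : ‖ek k x‖ = 1 := by
  simp [ek, Complex.norm_exp, Complex.mul_re]

lemma ek_mul_conj (k l : Fin 3 → ℤ) (x : Fin 3 → ℝ) :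
    ek k x * (starRingEnd ℂ) (ek l x) = ek (k - l) x := by
  unfold ek
  rw [← Complex.exp_conj, ← Complex.exp_add]
  congr 1
  rw [map_mul, Complex.conj_I, Complex.conj_ofReal]
  simp only [Pi.sub_apply]
  push_cast [sub_mul, Finset.sum_sub_distrib]
  ring

lemma integral_exp_Icc (m : ℤ) :
    (∫ t in Set.Icc (0:ℝ) (2*Real.pi), Complex.exp (Complex.I * (m : ℂ) * (t:ℂ)))
      = if m = 0 then ((2*Real.pi : ℝ) : ℂ) else 0 := by
  have h2pi : (0:ℝ) ≤ 2 * Real.pi := by positivity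
  rw [integral_Icc_eq_integral_Ioc, ← intervalIntegral.integral_of_le h2pi]
  by_cases hm : m = 0
  · simp [hm]
  · rw [if_neg hm]
    have hc : (Complex.I * (m:ℂ)) ≠ 0 := by
      simp [Complex.ext_iff, hm]
    have := integral_exp_mul_complex (a := 0) (b := 2*Real.pi) hc
    simp only [mul_assoc] at this ⊢
    rw [this]
    have h1 : Complex.exp (Complex.I * ((m:ℂ) * ((2*Real.pi : ℝ):ℂ))) = 1 := by
      rw [show Complex.I * ((m:ℂ) * ((2*Real.pi : ℝ):ℂ)) = (m:ℂ) * (2*Real.pi*Complex.I) by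
        push_cast; ring]
      exact Complex.exp_int_mul_two_pi_mul_I m
    rw [h1]
    simp

lemma integral_torusBox_prod (f : Fin 3 → ℝ → ℂ) :
    (∫ x in torusBox, ∏ i, f i (x i))
      = ∏ i, ∫ t in Set.Icc (0:ℝ) (2*Real.pi), f i t := by
  have hms : MeasurableSet torusBox :=
    MeasurableSet.univ_pi fun _ => measurableSet_Icc
  rw [← integral_indicator hms]
  have hind : (torusBox.indicator fun x => ∏ i, f i (x i))
      = fun x => ∏ i, (Set.Icc (0:ℝ) (2*Real.pi)).indicator (f i) (x i) := by
    funext x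
    by_cases hx : x ∈ torusBox
    · rw [Set.indicator_of_mem hx]
      exact Finset.prod_congr rfl fun i _ =>
        (Set.indicator_of_mem (hx i (Set.mem_univ i)) _).symm
    · rw [Set.indicator_of_notMem hx]
      have : ∃ i, x i ∉ Set.Icc (0:ℝ) (2*Real.pi) := by
        by_contra h
        push_neg at h
        exact hx fun i _ => h i
      obtain ⟨i, hi⟩ := this
      symm
      exact Finset.prod_eq_zero (Finset.mem_univ i) (Set.indicator_of_notMem hi _)
  rw [hind]; beta_reduce; rw [MeasureTheory.integral_fintype_prod_volume_eq_prod]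
  exact Finset.prod_congr rfl fun i _ => integral_indicator measurableSet_Icc

lemma integral_ek (k : Fin 3 → ℤ) :
    (∫ x in torusBox, ek k x) = if k = 0 then (((2*Real.pi)^3 : ℝ) : ℂ) else 0 := by
  have hek : ∀ x : Fin 3 → ℝ, ek k x = ∏ i, Complex.exp (Complex.I * (k i : ℂ) * (x i : ℂ)) := by
    intro x
    unfold ek
    rw [← Complex.exp_sum]
    congr 1
    push_cast
    rw [Finset.mul_sum]
    exact Finset.sum_congr rfl fun i _ => by ring
  simp_rw [hek]
  rw [integral_torusBox_prod (fun i t => Complex.exp (Complex.I * (k i : ℂ) * (t:ℂ)))]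
  simp_rw [integral_exp_Icc]
  by_cases hk : k = 0
  · subst hk
    simp only [Pi.zero_apply, if_pos rfl, if_pos rfl, Finset.prod_const]
    push_cast
    rw [Finset.card_univ, Fintype.card_fin]
  · rw [if_neg hk]
    have : ∃ i, k i ≠ 0 := by
      by_contra h
      push_neg at h
      exact hk (funext h)
    obtain ⟨i, hi⟩ := this
    exact Finset.prod_eq_zero (Finset.mem_univ i) (if_neg hi)

lemma integrableOn_torusBox {g : (Fin 3 → ℝ) → ℂ} (hg : Continuous g) :
    IntegrableOn g torusBox := by
  have : IsCompact torusBox := isCompact_univ_pi fun _ => isCompact_Icc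
  exact hg.continuousOn.integrableOn_compact this

lemma integrableOn_torusBox_real {g : (Fin 3 → ℝ) → ℝ} (hg : Continuous g) :
    IntegrableOn g torusBox := by
  have : IsCompact torusBox := isCompact_univ_pi fun _ => isCompact_Icc
  exact hg.continuousOn.integrableOn_compact this

lemma measurableSet_torusBox : MeasurableSet torusBox :=
  MeasurableSet.univ_pi fun _ => measurableSet_Icc

lemma parseval (a : (Fin 3 → ℤ) → ℂ) (F : Finset (Fin 3 → ℤ)) :
    (∫ x in torusBox, ‖∑ k ∈ F, a k * ek k x‖^2)
      = (2*Real.pi)^3 * ∑ k ∈ F, ‖a k‖^2 := by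
  set u : (Fin 3 → ℝ) → ℂ := fun x => ∑ k ∈ F, a k * ek k x with hu
  have hucont : Continuous u := by
    apply continuous_finset_sum
    exact fun k _ => continuous_const.mul (ek_continuous k)
  have h1 : ∀ x, (‖u x‖^2 : ℝ) = (u x * (starRingEnd ℂ) (u x)).re := by
    intro x
    rw [Complex.mul_conj]
    simp [Complex.sq_norm]
  have hconj : Continuous fun x => u x * (starRingEnd ℂ) (u x) :=
    hucont.mul (Complex.continuous_conj.comp hucont)
  calc (∫ x in torusBox, ‖u x‖^2)
      = ∫ x in torusBox, (u x * (starRingEnd ℂ) (u x)).re := by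
        exact setIntegral_congr_fun (MeasurableSet.univ_pi fun _ => measurableSet_Icc)
          (fun x _ => h1 x)
    _ = (∫ x in torusBox, u x * (starRingEnd ℂ) (u x)).re := by
        exact integral_re (integrableOn_torusBox hconj)
    _ = (2*Real.pi)^3 * ∑ k ∈ F, ‖a k‖^2 := by
        have hexpand : ∀ x, u x * (starRingEnd ℂ) (u x)
            = ∑ k ∈ F, ∑ l ∈ F, (a k * (starRingEnd ℂ) (a l)) * ek (k - l) x := by
          intro x
          rw [hu]
          simp only [map_sum, map_mul]
          rw [Finset.sum_mul_sum]
          refine Finset.sum_congr rfl fun k _ => Finset.sum_congr rfl fun l _ => ?_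
          rw [← ek_mul_conj k l x]
          ring
        have h2 : (∫ x in torusBox, u x * (starRingEnd ℂ) (u x))
            = ∫ x in torusBox, ∑ k ∈ F, ∑ l ∈ F, (a k * (starRingEnd ℂ) (a l)) * ek (k - l) x :=
          setIntegral_congr_fun measurableSet_torusBox (fun x _ => hexpand x)
        rw [h2]
        have hint : ∀ (k l : Fin 3 → ℤ),
            IntegrableOn (fun x => (a k * (starRingEnd ℂ) (a l)) * ek (k - l) x) torusBox :=
          fun k l => integrableOn_torusBox (continuous_const.mul (ek_continuous _))
        rw [integral_finset_sum F fun k _ => integrable_finset_sum F fun l _ => hint k l]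
        have h3 : ∀ k ∈ F, (∫ x in torusBox, ∑ l ∈ F, (a k * (starRingEnd ℂ) (a l)) * ek (k - l) x)
            = a k * (starRingEnd ℂ) (a k) * (((2*Real.pi)^3 : ℝ) : ℂ) := by
          intro k hk
          rw [integral_finset_sum F fun l _ => hint k l]
          have h4 : ∀ l ∈ F, (∫ x in torusBox, (a k * (starRingEnd ℂ) (a l)) * ek (k - l) x)
              = if l = k then a k * (starRingEnd ℂ) (a k) * (((2*Real.pi)^3 : ℝ) : ℂ) else 0 := by
            intro l _
            rw [integral_const_mul, integral_ek]
            by_cases hlk : l = k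
            · subst hlk
              simp
            · rw [if_neg (fun h => hlk (sub_eq_zero.mp h).symm), if_neg hlk, mul_zero]
          rw [Finset.sum_congr rfl h4, Finset.sum_ite_eq' F k]
          rw [if_pos hk]
        rw [Finset.sum_congr rfl h3]
        have h5 : (∑ k ∈ F, a k * (starRingEnd ℂ) (a k) * (((2*Real.pi)^3 : ℝ) : ℂ))
            = (((2*Real.pi)^3 * ∑ k ∈ F, ‖a k‖^2 : ℝ) : ℂ) := by
          push_cast
          rw [Finset.mul_sum]
          refine Finset.sum_congr rfl fun k _ => ?_
          rw [Complex.mul_conj, Complex.normSq_eq_norm_sq]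
          push_cast
          ring
        rw [h5, Complex.ofReal_re]

lemma norm_kr_ge_one {k : Fin 3 → ℤ} (hk : k ≠ 0) : 1 ≤ ‖kr k‖ := by
  have : ∃ i, k i ≠ 0 := by
    by_contra h
    push_neg at h
    exact hk (funext h)
  obtain ⟨i, hi⟩ := this
  have h1 : (1:ℝ) ≤ ‖(k i : ℝ)‖ ^ 2 := by
    have : (1:ℤ) ≤ |k i| := Int.one_le_abs hi
    have h2 : (1:ℝ) ≤ |(k i : ℝ)| := by exact_mod_cast (by push_cast [← Int.cast_abs]; exact_mod_cast this)
    rw [Real.norm_eq_abs]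
    nlinarith
  rw [EuclideanSpace.norm_eq]
  have hs : (1:ℝ) ≤ ∑ j, ‖kr k j‖ ^ 2 := by
    refine le_trans h1 (Finset.single_le_sum (f := fun j => ‖kr k j‖^2) (fun j _ => by positivity)
      (Finset.mem_univ i))
  calc (1:ℝ) = Real.sqrt 1 := (Real.sqrt_one).symm
    _ ≤ _ := Real.sqrt_le_sqrt hs

variable {χ : EuclideanSpace ℝ (Fin 3) → ℝ}

lemma Phi_abs_le_one (hrange : ∀ ξ, χ ξ ∈ Set.Icc (0 : ℝ) 1) (q : ℤ)
    (ξ : EuclideanSpace ℝ (Fin 3)) : |Phi χ q ξ| ≤ 1 := by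
  unfold Phi
  split
  · have h := hrange ξ
    rw [Set.mem_Icc] at h
    rw [abs_le]
    constructor <;> linarith
  · have ha := hrange ((2 : ℝ) ^ (-q - 1) • ξ)
    have hb := hrange ((2 : ℝ) ^ (-q) • ξ)
    rw [Set.mem_Icc] at ha hb
    rw [abs_le]
    constructor <;> [linarith; linarith]

lemma Phi_eq_zero (h1 : ∀ ξ, ‖ξ‖ ≤ 3 / 4 → χ ξ = 1) {p : ℤ} (hp : 0 ≤ p)
    {ξ : EuclideanSpace ℝ (Fin 3)} (hξ : ‖ξ‖ < 3/4 * (2:ℝ)^p) : Phi χ p ξ = 0 := by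
  unfold Phi
  rw [if_neg (by omega)]
  have key : ∀ m : ℤ, m ≤ -p → ‖(2:ℝ)^m • ξ‖ ≤ 3/4 := by
    intro m hm
    rw [norm_smul, Real.norm_eq_abs, abs_of_pos (zpow_pos (by norm_num) m)]
    have h1le : (2:ℝ)^m ≤ (2:ℝ)^(-p) := zpow_le_zpow_right₀ one_le_two hm
    have h2 : (2:ℝ)^(-p) * (2:ℝ)^p = 1 := by
      rw [← zpow_add₀ (by norm_num : (2:ℝ) ≠ 0)]
      simp
    have hzp : (0:ℝ) < (2:ℝ)^(-p) := zpow_pos (by norm_num) _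
    have hzm : (0:ℝ) < (2:ℝ)^m := zpow_pos (by norm_num) _
    nlinarith [norm_nonneg ξ]
  rw [h1 _ (key (-p-1) (by omega)), h1 _ (key (-p) le_rfl)]
  ring

lemma coeff_sq (h1 : ∀ ξ, ‖ξ‖ ≤ 3 / 4 → χ ξ = 1) (hrange : ∀ ξ, χ ξ ∈ Set.Icc (0 : ℝ) 1)
    {p : ℤ} (hp : 0 ≤ p) (c : (Fin 3 → ℤ) → ℂ) (k : Fin 3 → ℤ) :
    (|Phi χ p (kr k)| * ‖c k‖)^2
      ≤ 2 * (((2:ℝ)^p)⁻¹)^2 * ((1 + ‖kr k‖^2) * ‖c k‖^2) := by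
  by_cases hφ : Phi χ p (kr k) = 0
  · rw [hφ]
    simp only [abs_zero, zero_mul, ne_eq, OfNat.ofNat_ne_zero, not_false_eq_true, zero_pow]
    positivity
  · have hn : 3/4 * (2:ℝ)^p ≤ ‖kr k‖ :=
      le_of_not_gt (fun h => hφ (Phi_eq_zero h1 hp h))
    have hφ1 : |Phi χ p (kr k)| ≤ 1 := Phi_abs_le_one hrange p (kr k)
    have hz : (0:ℝ) < (2:ℝ)^p := zpow_pos (by norm_num) p
    have hinv : ((2:ℝ)^p)⁻¹ * (2:ℝ)^p = 1 := inv_mul_cancel₀ hz.ne'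
    have hA : (|Phi χ p (kr k)| * ‖c k‖)^2 ≤ ‖c k‖^2 := by
      nlinarith [mul_le_mul_of_nonneg_right
        (mul_le_mul hφ1 hφ1 (abs_nonneg _) zero_le_one) (mul_self_nonneg ‖c k‖),
        abs_nonneg (Phi χ p (kr k)), norm_nonneg (c k)]
    have hB : (3/4 * (2:ℝ)^p)^2 ≤ ‖kr k‖^2 := by
      nlinarith [norm_nonneg (kr k)]
    have hC : 2 * (((2:ℝ)^p)⁻¹)^2 * ‖c k‖^2 * ((3/4 * (2:ℝ)^p)^2)
        ≤ 2 * (((2:ℝ)^p)⁻¹)^2 * ‖c k‖^2 * ‖kr k‖^2 :=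
      mul_le_mul_of_nonneg_left hB (by positivity)
    have hD : 2 * (((2:ℝ)^p)⁻¹)^2 * ‖c k‖^2 * ((3/4 * (2:ℝ)^p)^2) = 9/8 * ‖c k‖^2 := by
      field_simp
      ring
    nlinarith [sq_nonneg (‖c k‖), mul_nonneg (mul_nonneg (by positivity : (0:ℝ) ≤ 2 * (((2:ℝ)^p)⁻¹)^2) (sq_nonneg ‖c k‖)) (sq_nonneg ‖kr k‖)]

lemma coeff_bound (h1 : ∀ ξ, ‖ξ‖ ≤ 3 / 4 → χ ξ = 1) (hrange : ∀ ξ, χ ξ ∈ Set.Icc (0 : ℝ) 1)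
    {p : ℤ} (hp : 0 ≤ p) (c : (Fin 3 → ℤ) → ℂ) (k : Fin 3 → ℤ) :
    |Phi χ p (kr k)| * ‖c k‖
      ≤ 2 * ((2:ℝ)^p)⁻¹ * Real.sqrt ((1 + ‖kr k‖^2) * ‖c k‖^2) := by
  have h := coeff_sq h1 hrange hp c k
  have hR : (2 * ((2:ℝ)^p)⁻¹ * Real.sqrt ((1 + ‖kr k‖^2) * ‖c k‖^2))^2
      = 4 * (((2:ℝ)^p)⁻¹)^2 * ((1 + ‖kr k‖^2) * ‖c k‖^2) := by
    rw [mul_pow, mul_pow, Real.sq_sqrt (by positivity)]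
    ring
  have hL : |Phi χ p (kr k)| * ‖c k‖
      = Real.sqrt ((|Phi χ p (kr k)| * ‖c k‖)^2) := by
    rw [Real.sqrt_sq (by positivity)]
  rw [hL, ← Real.sqrt_sq (by positivity : (0:ℝ) ≤ 2 * ((2:ℝ)^p)⁻¹ * Real.sqrt ((1 + ‖kr k‖^2) * ‖c k‖^2)), hR]
  apply Real.sqrt_le_sqrt
  nlinarith [h, mul_nonneg (sq_nonneg ((2:ℝ)^p)⁻¹)
    (mul_nonneg (by positivity : (0:ℝ) ≤ 1 + ‖kr k‖^2) (sq_nonneg ‖c k‖))]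

lemma card_Kset {p : ℤ} (hp : 0 ≤ p) : ((Kset p).card : ℝ) ≤ 512 * ((2:ℝ)^p)^3 := by
  obtain ⟨n, rfl⟩ := Int.eq_ofNat_of_zero_le hp
  unfold Kset
  rw [Pi.card_Icc]
  simp only [Int.card_Icc]
  rw [Finset.prod_const, Finset.card_univ, Fintype.card_fin]
  have htn : ((n:ℤ) + 1).toNat = n + 1 := by omega
  rw [htn]
  have hval : ((2:ℤ) ^ (n+1) + 1 - -2 ^ (n+1)) = 2 * 2^(n+1) + 1 := by ring
  rw [hval]
  rw [show ((2:ℤ) * 2^(n+1) + 1) = ((2 * 2^(n+1) + 1 : ℕ) : ℤ) by push_cast; ring,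
    Int.toNat_natCast, zpow_natCast]
  push_cast
  have h1a : (1:ℝ) ≤ (2:ℝ)^n := one_le_pow₀ one_le_two
  have hb : (0:ℝ) ≤ 2 * ((2:ℝ)^n * 2) + 1 := by positivity
  have hle : 2 * ((2:ℝ)^n * 2) + 1 ≤ 8 * (2:ℝ)^n := by linarith
  calc (2 * ((2:ℝ)^n * 2) + 1)^3 ≤ (8 * (2:ℝ)^n)^3 := by
        exact pow_le_pow_left₀ hb hle 3
    _ = 512 * ((2:ℝ)^n)^3 := by ring

lemma sum_sqrt_le (F : Finset (Fin 3 → ℤ)) (t : (Fin 3 → ℤ) → ℝ) (ht : ∀ k, 0 ≤ t k) :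
    ∑ k ∈ F, Real.sqrt (t k) ≤ Real.sqrt (F.card) * Real.sqrt (∑ k ∈ F, t k) := by
  have h := sq_sum_le_card_mul_sum_sq (s := F) (f := fun k => Real.sqrt (t k))
  have h2 : ∑ k ∈ F, Real.sqrt (t k) ^ 2 = ∑ k ∈ F, t k :=
    Finset.sum_congr rfl fun k _ => Real.sq_sqrt (ht k)
  rw [h2] at h
  calc ∑ k ∈ F, Real.sqrt (t k)
      = Real.sqrt ((∑ k ∈ F, Real.sqrt (t k))^2) :=
        (Real.sqrt_sq (Finset.sum_nonneg fun k _ => Real.sqrt_nonneg _)).symm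
    _ ≤ Real.sqrt (F.card * ∑ k ∈ F, t k) := Real.sqrt_le_sqrt (by exact_mod_cast h)
    _ = Real.sqrt (F.card) * Real.sqrt (∑ k ∈ F, t k) := Real.sqrt_mul (by positivity) _

lemma sqrt512_le : Real.sqrt 512 ≤ 23 := by
  rw [show (23:ℝ) = Real.sqrt (23^2) from (Real.sqrt_sq (by norm_num)).symm]
  exact Real.sqrt_le_sqrt (by norm_num)

lemma ublock_sup (h1 : ∀ ξ, ‖ξ‖ ≤ 3 / 4 → χ ξ = 1) (hrange : ∀ ξ, χ ξ ∈ Set.Icc (0 : ℝ) 1)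
    {p : ℤ} (hp : 0 ≤ p) (c : (Fin 3 → ℤ) → ℂ)
    (hsum : Summable (fun k : Fin 3 → ℤ => (1 + ‖kr k‖ ^ 2) * ‖c k‖ ^ 2)) (x : Fin 3 → ℝ) :
    ‖ublock χ c p x‖ ≤ 64 * Real.sqrt ((2:ℝ)^p)
      * Real.sqrt (∑' k : Fin 3 → ℤ, (1 + ‖kr k‖ ^ 2) * ‖c k‖ ^ 2) := by
  set t : (Fin 3 → ℤ) → ℝ := fun k => (1 + ‖kr k‖ ^ 2) * ‖c k‖ ^ 2 with htdef
  set S := ∑' k, t k with hSdef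
  have ht0 : ∀ k, 0 ≤ t k := fun k => by positivity
  have hS0 : 0 ≤ S := tsum_nonneg ht0
  have hz : (0:ℝ) < (2:ℝ)^p := zpow_pos (by norm_num) p
  have hterm : ∀ k, ‖(Phi χ p (kr k) : ℂ) * c k * ek k x‖
      ≤ 2 * ((2:ℝ)^p)⁻¹ * Real.sqrt (t k) := by
    intro k
    rw [norm_mul, norm_mul, ek_norm, mul_one, Complex.norm_real]
    exact coeff_bound h1 hrange hp c k
  have hsumF : ∑ k ∈ Kset p, t k ≤ S :=
    hsum.sum_le_tsum (Kset p) (fun k _ => ht0 k)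
  have hstep : Real.sqrt ((Kset p).card) * Real.sqrt (∑ k ∈ Kset p, t k)
      ≤ (23 * (2:ℝ)^p * Real.sqrt ((2:ℝ)^p)) * Real.sqrt S := by
    have hc1 : Real.sqrt ((Kset p).card) ≤ 23 * (2:ℝ)^p * Real.sqrt ((2:ℝ)^p) := by
      calc Real.sqrt ((Kset p).card) ≤ Real.sqrt (512 * ((2:ℝ)^p)^3) :=
            Real.sqrt_le_sqrt (card_Kset hp)
        _ = Real.sqrt (512 * (((2:ℝ)^p)^2 * (2:ℝ)^p)) := by
            rw [show 512 * ((2:ℝ)^p)^3 = 512 * (((2:ℝ)^p)^2 * (2:ℝ)^p) by ring]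
        _ = Real.sqrt 512 * Real.sqrt (((2:ℝ)^p)^2 * (2:ℝ)^p) :=
            Real.sqrt_mul (by norm_num) _
        _ = Real.sqrt 512 * ((2:ℝ)^p * Real.sqrt ((2:ℝ)^p)) := by
            rw [Real.sqrt_mul (by positivity), Real.sqrt_sq hz.le]
        _ ≤ 23 * ((2:ℝ)^p * Real.sqrt ((2:ℝ)^p)) := by
            apply mul_le_mul_of_nonneg_right sqrt512_le (by positivity)
        _ = 23 * (2:ℝ)^p * Real.sqrt ((2:ℝ)^p) := by ring
    exact mul_le_mul hc1 (Real.sqrt_le_sqrt hsumF) (Real.sqrt_nonneg _) (by positivity)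
  calc ‖ublock χ c p x‖ ≤ ∑ k ∈ Kset p, ‖(Phi χ p (kr k) : ℂ) * c k * ek k x‖ :=
        norm_sum_le _ _
    _ ≤ ∑ k ∈ Kset p, 2 * ((2:ℝ)^p)⁻¹ * Real.sqrt (t k) :=
        Finset.sum_le_sum fun k _ => hterm k
    _ = 2 * ((2:ℝ)^p)⁻¹ * ∑ k ∈ Kset p, Real.sqrt (t k) := by rw [← Finset.mul_sum]
    _ ≤ 2 * ((2:ℝ)^p)⁻¹ * (Real.sqrt ((Kset p).card) * Real.sqrt (∑ k ∈ Kset p, t k)) := by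
        apply mul_le_mul_of_nonneg_left (sum_sqrt_le _ _ ht0) (by positivity)
    _ ≤ 2 * ((2:ℝ)^p)⁻¹ * ((23 * (2:ℝ)^p * Real.sqrt ((2:ℝ)^p)) * Real.sqrt S) := by
        apply mul_le_mul_of_nonneg_left hstep (by positivity)
    _ = 46 * (((2:ℝ)^p)⁻¹ * (2:ℝ)^p) * Real.sqrt ((2:ℝ)^p) * Real.sqrt S := by ring
    _ = 46 * Real.sqrt ((2:ℝ)^p) * Real.sqrt S := by
        rw [inv_mul_cancel₀ hz.ne']
        ring
    _ ≤ 64 * Real.sqrt ((2:ℝ)^p) * Real.sqrt S := by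
        have := Real.sqrt_nonneg ((2:ℝ)^p)
        have := Real.sqrt_nonneg S
        nlinarith

lemma ublock_l2 (h1 : ∀ ξ, ‖ξ‖ ≤ 3 / 4 → χ ξ = 1) (hrange : ∀ ξ, χ ξ ∈ Set.Icc (0 : ℝ) 1)
    {p : ℤ} (hp : 0 ≤ p) (c : (Fin 3 → ℤ) → ℂ)
    (hsum : Summable (fun k : Fin 3 → ℤ => (1 + ‖kr k‖ ^ 2) * ‖c k‖ ^ 2)) :
    (∫ x in torusBox, ‖ublock χ c p x‖^2)
      ≤ 512 * (((2:ℝ)^p)⁻¹)^2 * (∑' k : Fin 3 → ℤ, (1 + ‖kr k‖ ^ 2) * ‖c k‖ ^ 2) := by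
  set t : (Fin 3 → ℤ) → ℝ := fun k => (1 + ‖kr k‖ ^ 2) * ‖c k‖ ^ 2 with htdef
  set S := ∑' k, t k with hSdef
  have ht0 : ∀ k, 0 ≤ t k := fun k => by positivity
  have hS0 : 0 ≤ S := tsum_nonneg ht0
  have heq : (∫ x in torusBox, ‖ublock χ c p x‖^2)
      = (2*Real.pi)^3 * ∑ k ∈ Kset p, ‖(Phi χ p (kr k) : ℂ) * c k‖^2 :=
    parseval (fun k => (Phi χ p (kr k) : ℂ) * c k) (Kset p)
  rw [heq]
  have hsum1 : ∑ k ∈ Kset p, ‖(Phi χ p (kr k) : ℂ) * c k‖^2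
      ≤ 2 * (((2:ℝ)^p)⁻¹)^2 * S := by
    calc ∑ k ∈ Kset p, ‖(Phi χ p (kr k) : ℂ) * c k‖^2
        ≤ ∑ k ∈ Kset p, 2 * (((2:ℝ)^p)⁻¹)^2 * t k := by
          refine Finset.sum_le_sum fun k _ => ?_
          rw [norm_mul, Complex.norm_real]
          exact coeff_sq h1 hrange hp c k
      _ = 2 * (((2:ℝ)^p)⁻¹)^2 * ∑ k ∈ Kset p, t k := by rw [← Finset.mul_sum]
      _ ≤ 2 * (((2:ℝ)^p)⁻¹)^2 * S := by
          apply mul_le_mul_of_nonneg_left (hsum.sum_le_tsum (Kset p) (fun k _ => ht0 k))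
          positivity
  have hpi : (2*Real.pi)^3 ≤ 256 := by
    have h6 : 2*Real.pi ≤ 6.3 := by nlinarith [Real.pi_lt_d2]
    calc (2*Real.pi)^3 ≤ 6.3^3 := pow_le_pow_left₀ (by positivity) h6 3
      _ ≤ 256 := by norm_num
  have hpi0 : (0:ℝ) ≤ (2*Real.pi)^3 := by positivity
  have hsum0 : (0:ℝ) ≤ ∑ k ∈ Kset p, ‖(Phi χ p (kr k) : ℂ) * c k‖^2 :=
    Finset.sum_nonneg fun k _ => by positivity
  calc (2*Real.pi)^3 * ∑ k ∈ Kset p, ‖(Phi χ p (kr k) : ℂ) * c k‖^2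
      ≤ 256 * (2 * (((2:ℝ)^p)⁻¹)^2 * S) := by
        apply mul_le_mul hpi hsum1 hsum0 (by norm_num)
    _ = 512 * (((2:ℝ)^p)⁻¹)^2 * S := by ring

lemma ublock_neg_one (h0 : ∀ ξ, 1 ≤ ‖ξ‖ → χ ξ = 0) (c : (Fin 3 → ℤ) → ℂ)
    (hc0 : c 0 = 0) (x : Fin 3 → ℝ) : ublock χ c (-1) x = 0 := by
  unfold ublock
  apply Finset.sum_eq_zero
  intro k _
  by_cases hk : k = 0
  · subst hk
    rw [hc0]
    ring
  · unfold Phi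
    rw [if_pos rfl, h0 _ (norm_kr_ge_one hk)]
    simp

lemma geo_sum : ∀ Q : ℤ, 0 ≤ Q →
    ∑ p ∈ Finset.Icc (0:ℤ) Q, Real.sqrt ((2:ℝ)^p) ≤ 4 * Real.sqrt ((2:ℝ)^Q) := by
  have hs2 : (4/3 : ℝ) ≤ Real.sqrt 2 := by
    nlinarith [Real.sq_sqrt (by norm_num : (0:ℝ) ≤ 2), Real.sqrt_nonneg 2]
  intro Q
  refine Int.le_induction (motive := fun Q _ => ∑ p ∈ Finset.Icc (0:ℤ) Q, Real.sqrt ((2:ℝ)^p)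
    ≤ 4 * Real.sqrt ((2:ℝ)^Q)) ?_ ?_ Q
  · simp
  · intro n hn ih
    have hins : Finset.Icc (0:ℤ) (n+1) = insert (n+1) (Finset.Icc 0 n) := by
      ext m
      simp only [Finset.mem_Icc, Finset.mem_insert]
      omega
    have hnotmem : (n+1) ∉ Finset.Icc (0:ℤ) n := by
      simp only [Finset.mem_Icc]
      omega
    rw [hins, Finset.sum_insert hnotmem]
    have h2 : (2:ℝ)^(n+1) = 2 * (2:ℝ)^n := by
      rw [zpow_add_one₀ (by norm_num : (2:ℝ) ≠ 0)]
      ring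
    have hsqrt : Real.sqrt ((2:ℝ)^(n+1)) = Real.sqrt 2 * Real.sqrt ((2:ℝ)^n) := by
      rw [h2, Real.sqrt_mul (by norm_num)]
    rw [hsqrt]
    have ha : (0:ℝ) ≤ Real.sqrt ((2:ℝ)^n) := Real.sqrt_nonneg _
    nlinarith [ih, Real.sqrt_nonneg 2]

lemma ublock_lr (h1 : ∀ ξ, ‖ξ‖ ≤ 3 / 4 → χ ξ = 1) (hrange : ∀ ξ, χ ξ ∈ Set.Icc (0 : ℝ) 1)
    {r : ℝ} (hr2 : 2 < r) (hr3 : r < 3) {p : ℤ} (hp : 0 ≤ p) (c : (Fin 3 → ℤ) → ℂ)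
    (hsum : Summable (fun k : Fin 3 → ℤ => (1 + ‖kr k‖ ^ 2) * ‖c k‖ ^ 2)) :
    LrNorm r (ublock χ c p)
      ≤ 32768 * ((2:ℝ)^p) ^ ((1:ℝ)/2 - 3/r)
        * Real.sqrt (∑' k : Fin 3 → ℤ, (1 + ‖kr k‖ ^ 2) * ‖c k‖ ^ 2) := by
  have hr0 : (0:ℝ) < r := by linarith
  set S := ∑' k : Fin 3 → ℤ, (1 + ‖kr k‖ ^ 2) * ‖c k‖ ^ 2 with hSdef
  have hS0 : 0 ≤ S := tsum_nonneg fun k => by positivity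
  set lam := (2:ℝ)^p with hlamdef
  have hlam0 : (0:ℝ) < lam := zpow_pos (by norm_num) p
  set M := 64 * Real.sqrt lam * Real.sqrt S with hMdef
  have hM0 : (0:ℝ) ≤ M := by positivity
  set L := 512 * (lam⁻¹)^2 * S with hLdef
  have hL0 : (0:ℝ) ≤ L := by positivity
  have hbound : ∀ x, ‖ublock χ c p x‖ ≤ M := fun x => ublock_sup h1 hrange hp c hsum x
  have hcont : Continuous (ublock χ c p) :=
    continuous_finset_sum _ fun k _ => continuous_const.mul (ek_continuous k)
  have hptwise : ∀ x : Fin 3 → ℝ, ‖ublock χ c p x‖ ^ r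
      ≤ M ^ (r - 2) * ‖ublock χ c p x‖ ^ (2:ℕ) := by
    intro x
    have hn : (0:ℝ) ≤ ‖ublock χ c p x‖ := norm_nonneg _
    calc ‖ublock χ c p x‖ ^ r = ‖ublock χ c p x‖ ^ ((r-2) + 2) := by norm_num
      _ = ‖ublock χ c p x‖ ^ (r-2) * ‖ublock χ c p x‖ ^ (2:ℝ) :=
          Real.rpow_add' hn (by linarith)
      _ ≤ M ^ (r-2) * ‖ublock χ c p x‖ ^ (2:ℝ) :=
          mul_le_mul_of_nonneg_right (Real.rpow_le_rpow hn (hbound x) (by linarith))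
            (Real.rpow_nonneg hn 2)
      _ = M ^ (r-2) * ‖ublock χ c p x‖ ^ (2:ℕ) := by
          rw [show (2:ℝ) = ((2:ℕ):ℝ) by norm_num, Real.rpow_natCast]
  have hintr : IntegrableOn (fun x => ‖ublock χ c p x‖ ^ r) torusBox :=
    integrableOn_torusBox_real (hcont.norm.rpow_const fun x => Or.inr hr0.le)
  have hint2 : IntegrableOn (fun x => M ^ (r-2) * ‖ublock χ c p x‖ ^ (2:ℕ)) torusBox :=
    integrableOn_torusBox_real (continuous_const.mul (hcont.norm.pow 2))
  have hIle : (∫ x in torusBox, ‖ublock χ c p x‖ ^ r) ≤ M ^ (r-2) * L := by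
    calc (∫ x in torusBox, ‖ublock χ c p x‖ ^ r)
        ≤ ∫ x in torusBox, M ^ (r-2) * ‖ublock χ c p x‖ ^ (2:ℕ) :=
          setIntegral_mono_on hintr hint2 measurableSet_torusBox (fun x _ => hptwise x)
      _ = M ^ (r-2) * ∫ x in torusBox, ‖ublock χ c p x‖ ^ (2:ℕ) := integral_const_mul _ _
      _ ≤ M ^ (r-2) * L := by
          apply mul_le_mul_of_nonneg_left _ (Real.rpow_nonneg hM0 _)
          exact ublock_l2 h1 hrange hp c hsum
  have hI0 : (0:ℝ) ≤ ∫ x in torusBox, ‖ublock χ c p x‖ ^ r :=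
    setIntegral_nonneg measurableSet_torusBox fun x _ => Real.rpow_nonneg (norm_nonneg _) r
  have step : LrNorm r (ublock χ c p) ≤ (M ^ (r-2) * L) ^ ((1:ℝ)/r) := by
    unfold LrNorm
    exact Real.rpow_le_rpow hI0 hIle (by positivity)
  refine le_trans step ?_
  have hBE : (1/2) * ((r-2)*(1/r)) + (-2) * (1/r) = (1:ℝ)/2 - 3/r := by
    field_simp
    ring
  have hCF : (1/2) * ((r-2)*(1/r)) + 1/r = (1:ℝ)/2 := by
    field_simp
    ring
  have key : (M ^ (r-2) * L) ^ ((1:ℝ)/r)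
      = (64 ^ ((r-2)*(1/r)) * 512 ^ ((1:ℝ)/r)) * lam ^ ((1:ℝ)/2 - 3/r) * Real.sqrt S := by
    calc (M ^ (r-2) * L) ^ ((1:ℝ)/r)
        = (M ^ (r-2)) ^ ((1:ℝ)/r) * L ^ ((1:ℝ)/r) :=
          Real.mul_rpow (Real.rpow_nonneg hM0 _) hL0
      _ = M ^ ((r-2)*(1/r)) * L ^ ((1:ℝ)/r) := by rw [← Real.rpow_mul hM0]
      _ = (64 ^ ((r-2)*(1/r)) * (Real.sqrt lam) ^ ((r-2)*(1/r)) * (Real.sqrt S) ^ ((r-2)*(1/r)))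
          * (512 ^ ((1:ℝ)/r) * ((lam⁻¹)^2) ^ ((1:ℝ)/r) * S ^ ((1:ℝ)/r)) := by
          rw [hMdef, hLdef, Real.mul_rpow (by positivity) (Real.sqrt_nonneg S),
            Real.mul_rpow (by norm_num) (Real.sqrt_nonneg lam),
            Real.mul_rpow (by positivity) hS0,
            Real.mul_rpow (by norm_num) (by positivity)]
      _ = (64 ^ ((r-2)*(1/r)) * 512 ^ ((1:ℝ)/r))
          * (lam ^ ((1/2) * ((r-2)*(1/r))) * lam ^ ((-2) * ((1:ℝ)/r)))
          * (S ^ ((1/2) * ((r-2)*(1/r))) * S ^ ((1:ℝ)/r)) := by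
          rw [Real.sqrt_eq_rpow lam, Real.sqrt_eq_rpow S,
            ← Real.rpow_mul hlam0.le, ← Real.rpow_mul hS0,
            show ((lam⁻¹)^2 : ℝ) = lam ^ ((-2:ℝ)) by
              rw [Real.rpow_neg hlam0.le, show ((2:ℝ)) = ((2:ℕ):ℝ) by norm_num,
                Real.rpow_natCast, inv_pow],
            ← Real.rpow_mul hlam0.le]
          ring
      _ = (64 ^ ((r-2)*(1/r)) * 512 ^ ((1:ℝ)/r)) * lam ^ ((1:ℝ)/2 - 3/r) * Real.sqrt S := by
          rw [← Real.rpow_add hlam0, ← Real.rpow_add' hS0 (by rw [hCF]; norm_num),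
            hBE, hCF, ← Real.sqrt_eq_rpow]
  rw [key]
  have hc1 : (64:ℝ) ^ ((r-2)*(1/r)) ≤ 64 := by
    calc (64:ℝ) ^ ((r-2)*(1/r)) ≤ (64:ℝ) ^ (1:ℝ) := by
          apply Real.rpow_le_rpow_of_exponent_le (by norm_num)
          rw [mul_one_div, div_le_one hr0]
          linarith
      _ = 64 := Real.rpow_one 64
  have hc2 : (512:ℝ) ^ ((1:ℝ)/r) ≤ 512 := by
    calc (512:ℝ) ^ ((1:ℝ)/r) ≤ (512:ℝ) ^ (1:ℝ) := by
          apply Real.rpow_le_rpow_of_exponent_le (by norm_num)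
          rw [div_le_one hr0]
          linarith
      _ = 512 := Real.rpow_one 512
  have hcc : (64:ℝ) ^ ((r-2)*(1/r)) * 512 ^ ((1:ℝ)/r) ≤ 32768 := by
    calc (64:ℝ) ^ ((r-2)*(1/r)) * 512 ^ ((1:ℝ)/r) ≤ 64 * 512 :=
          mul_le_mul hc1 hc2 (Real.rpow_nonneg (by norm_num) _) (by norm_num)
      _ = 32768 := by norm_num
  apply mul_le_mul_of_nonneg_right _ (Real.sqrt_nonneg S)
  exact mul_le_mul_of_nonneg_right hcc (Real.rpow_nonneg hlam0.le _)

end S18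

open S18

/-- Well-definedness of the determining wavenumber `Λ_{u,r}` for `u ∈ H¹(𝕋³)`
with zero mean, together with the pointwise bound `Λ_{u,r} ≤ C_r ν^{-2} ‖u‖_{H¹}² + λ₀`:
there is a dyadic level `Q` at which both defining conditions of `Λ_{u,r}` hold
and `λ_Q = 2^Q` obeys the bound. -/
theorem stmt18 (χ : EuclideanSpace ℝ (Fin 3) → ℝ)
    (hsmooth : ContDiff ℝ (⊤ : ℕ∞) χ)
    (hrange : ∀ ξ, χ ξ ∈ Set.Icc (0 : ℝ) 1)
    (hradial : ∀ ξ η, ‖ξ‖ = ‖η‖ → χ ξ = χ η)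
    (h1 : ∀ ξ, ‖ξ‖ ≤ 3 / 4 → χ ξ = 1)
    (h0 : ∀ ξ, 1 ≤ ‖ξ‖ → χ ξ = 0)
    (r : ℝ) (hr2 : 2 < r) (hr3 : r < 3) (cr : ℝ) (hcr : 0 < cr) :
    ∃ C : ℝ, 0 < C ∧ ∀ ν : ℝ, 0 < ν → ∀ c : (Fin 3 → ℤ) → ℂ, c 0 = 0 →
      Summable (fun k : Fin 3 → ℤ => (1 + ‖kr k‖ ^ 2) * ‖c k‖ ^ 2) →
      ∃ Q : ℤ, -1 ≤ Q ∧
        (∀ p : ℤ, Q < p →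
          ((2 : ℝ) ^ p) ^ (-1 + 3 / r) * LrNorm r (ublock χ c p) < cr * ν) ∧
        ((2 : ℝ) ^ Q)⁻¹ *
            LinfNorm (fun x => ∑ p ∈ Finset.Icc (-1 : ℤ) Q, ublock χ c p x) < cr * ν ∧
        (2 : ℝ) ^ Q ≤
          C * (ν ^ 2)⁻¹ * (∑' k : Fin 3 → ℤ, (1 + ‖kr k‖ ^ 2) * ‖c k‖ ^ 2) + 1 := by
  have hr0 : (0:ℝ) < r := by linarith
  refine ⟨2 * 32768^2 / cr^2, by positivity, ?_⟩
  intro ν hν c hc0 hsum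
  set S := ∑' k : Fin 3 → ℤ, (1 + ‖kr k‖ ^ 2) * ‖c k‖ ^ 2 with hSdef
  have hS0 : 0 ≤ S := tsum_nonneg fun k => by positivity
  set T := 32768^2 * S / (cr^2 * ν^2) with hTdef
  have hT0 : 0 ≤ T := by positivity
  obtain ⟨Q, hQ0, hQgt, hQle⟩ :
      ∃ Q : ℤ, 0 ≤ Q ∧ T < (2:ℝ)^Q ∧ (2:ℝ)^Q ≤ 2*T + 1 := by
    by_cases hT1 : T < 1
    · refine ⟨0, le_refl 0, by simpa using hT1, by simp; linarith⟩
    · push_neg at hT1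
      have hTpos : (0:ℝ) < T := lt_of_lt_of_le one_pos hT1
      set x := Real.logb 2 T with hx
      refine ⟨⌊x⌋ + 1, ?_, ?_, ?_⟩
      · have hx0 : (0:ℝ) ≤ x := Real.logb_nonneg one_lt_two hT1
        have := Int.le_floor.mpr (by exact_mod_cast hx0 : ((0:ℤ):ℝ) ≤ x)
        omega
      · have heq : T = (2:ℝ) ^ x := (Real.rpow_logb two_pos (by norm_num) hTpos).symm
        have h2 : x < ((⌊x⌋ + 1 : ℤ) : ℝ) := by exact_mod_cast Int.lt_floor_add_one x
        calc T = (2:ℝ) ^ x := heq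
          _ < (2:ℝ) ^ (((⌊x⌋ + 1 : ℤ) : ℝ)) :=
              (Real.rpow_lt_rpow_left_iff one_lt_two).mpr h2
          _ = (2:ℝ) ^ (⌊x⌋ + 1 : ℤ) := Real.rpow_intCast 2 _
      · have h3 : ((⌊x⌋ : ℤ) : ℝ) ≤ x := Int.floor_le x
        calc (2:ℝ) ^ (⌊x⌋ + 1 : ℤ) = (2:ℝ) ^ ((⌊x⌋ + 1 : ℤ) : ℝ) :=
              (Real.rpow_intCast 2 _).symm
          _ ≤ (2:ℝ) ^ (x + 1) :=
              Real.rpow_le_rpow_of_exponent_le one_le_two (by push_cast; linarith)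
          _ = (2:ℝ) ^ x * 2 := by rw [Real.rpow_add two_pos, Real.rpow_one]
          _ = T * 2 := by rw [Real.rpow_logb two_pos (by norm_num) hTpos]
          _ ≤ 2*T + 1 := by linarith
  have hlamQ : (0:ℝ) < (2:ℝ)^Q := zpow_pos (by norm_num) Q
  have hkey : ∀ p : ℤ, Q ≤ p → 32768 * Real.sqrt (((2:ℝ)^p)⁻¹) * Real.sqrt S < cr * ν := by
    intro p hQp
    have hlamp : (0:ℝ) < (2:ℝ)^p := zpow_pos (by norm_num) p
    have hmono : (2:ℝ)^Q ≤ (2:ℝ)^p := zpow_le_zpow_right₀ one_le_two hQp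
    have hA : (32768:ℝ)^2 * S < cr^2 * ν^2 * (2:ℝ)^Q := by
      calc (32768:ℝ)^2 * S = T * (cr^2 * ν^2) := by
            rw [hTdef]; field_simp
        _ < (2:ℝ)^Q * (cr^2*ν^2) := mul_lt_mul_of_pos_right hQgt (by positivity)
        _ = cr^2*ν^2*(2:ℝ)^Q := by ring
    have hA' : (32768:ℝ)^2 * S < cr^2*ν^2*(2:ℝ)^p :=
      lt_of_lt_of_le hA (mul_le_mul_of_nonneg_left hmono (by positivity))
    have hB : (32768:ℝ)^2 * (((2:ℝ)^p)⁻¹) * S < cr^2 * ν^2 := by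
      calc (32768:ℝ)^2 * ((2:ℝ)^p)⁻¹ * S = (32768^2 * S) * ((2:ℝ)^p)⁻¹ := by ring
        _ < (cr^2*ν^2*(2:ℝ)^p) * ((2:ℝ)^p)⁻¹ :=
            mul_lt_mul_of_pos_right hA' (by positivity)
        _ = cr^2*ν^2 := by field_simp
    have hL : 32768 * Real.sqrt (((2:ℝ)^p)⁻¹) * Real.sqrt S
        = Real.sqrt (32768^2 * (((2:ℝ)^p)⁻¹) * S) := by
      rw [Real.sqrt_mul (by positivity), Real.sqrt_mul (by norm_num : (0:ℝ) ≤ 32768^2),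
        Real.sqrt_sq (by norm_num : (0:ℝ) ≤ 32768)]
    have hR : cr * ν = Real.sqrt (cr^2 * ν^2) := by
      rw [← mul_pow, Real.sqrt_sq (by positivity)]
    rw [hL, hR]
    exact Real.sqrt_lt_sqrt (by positivity) hB
  refine ⟨Q, by omega, ?_, ?_, ?_⟩
  · intro p hQp
    have hp0 : (0:ℤ) ≤ p := by omega
    have hlamp : (0:ℝ) < (2:ℝ)^p := zpow_pos (by norm_num) p
    have hlr := ublock_lr h1 hrange hr2 hr3 hp0 c hsum
    have hfac : ((2:ℝ)^p) ^ (-1 + 3/r) * ((2:ℝ)^p) ^ ((1:ℝ)/2 - 3/r)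
        = Real.sqrt (((2:ℝ)^p)⁻¹) := by
      rw [← Real.rpow_add hlamp, show (-1 + 3/r) + ((1:ℝ)/2 - 3/r) = -(1/2) by ring,
        Real.rpow_neg hlamp.le, ← Real.sqrt_eq_rpow, Real.sqrt_inv]
    have hprod : ((2:ℝ)^p) ^ (-1 + 3/r) * LrNorm r (ublock χ c p)
        ≤ 32768 * Real.sqrt (((2:ℝ)^p)⁻¹) * Real.sqrt S := by
      calc ((2:ℝ)^p) ^ (-1 + 3/r) * LrNorm r (ublock χ c p)
          ≤ ((2:ℝ)^p) ^ (-1 + 3/r) * (32768 * ((2:ℝ)^p) ^ ((1:ℝ)/2 - 3/r) * Real.sqrt S) :=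
            mul_le_mul_of_nonneg_left hlr (Real.rpow_nonneg hlamp.le _)
        _ = 32768 * (((2:ℝ)^p) ^ (-1 + 3/r) * ((2:ℝ)^p) ^ ((1:ℝ)/2 - 3/r)) * Real.sqrt S := by
            ring
        _ = 32768 * Real.sqrt (((2:ℝ)^p)⁻¹) * Real.sqrt S := by rw [hfac]
    exact lt_of_le_of_lt hprod (hkey p (by omega))
  · have hsup : ∀ x : Fin 3 → ℝ, ‖∑ pp ∈ Finset.Icc (-1 : ℤ) Q, ublock χ c pp x‖
        ≤ 256 * Real.sqrt ((2:ℝ)^Q) * Real.sqrt S := by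
      intro x
      have hins : Finset.Icc (-1:ℤ) Q = insert (-1) (Finset.Icc 0 Q) := by
        ext m
        simp only [Finset.mem_Icc, Finset.mem_insert]
        omega
      have hnm : (-1:ℤ) ∉ Finset.Icc (0:ℤ) Q := by simp
      rw [hins, Finset.sum_insert hnm, ublock_neg_one h0 c hc0 x, zero_add]
      calc ‖∑ pp ∈ Finset.Icc (0:ℤ) Q, ublock χ c pp x‖
          ≤ ∑ pp ∈ Finset.Icc (0:ℤ) Q, ‖ublock χ c pp x‖ := norm_sum_le _ _
        _ ≤ ∑ pp ∈ Finset.Icc (0:ℤ) Q, 64 * Real.sqrt ((2:ℝ)^pp) * Real.sqrt S := by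
            refine Finset.sum_le_sum fun pp hpp => ?_
            exact ublock_sup h1 hrange (Finset.mem_Icc.mp hpp).1 c hsum x
        _ = 64 * Real.sqrt S * ∑ pp ∈ Finset.Icc (0:ℤ) Q, Real.sqrt ((2:ℝ)^pp) := by
            rw [Finset.mul_sum]
            exact Finset.sum_congr rfl fun pp _ => by ring
        _ ≤ 64 * Real.sqrt S * (4 * Real.sqrt ((2:ℝ)^Q)) :=
            mul_le_mul_of_nonneg_left (geo_sum Q hQ0) (by positivity)
        _ = 256 * Real.sqrt ((2:ℝ)^Q) * Real.sqrt S := by ring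
    have hlinf : LinfNorm (fun x => ∑ pp ∈ Finset.Icc (-1 : ℤ) Q, ublock χ c pp x)
        ≤ 256 * Real.sqrt ((2:ℝ)^Q) * Real.sqrt S := by
      unfold LinfNorm
      exact ciSup_le hsup
    have haQ : (0:ℝ) < Real.sqrt ((2:ℝ)^Q) := Real.sqrt_pos.mpr hlamQ
    have haux : ((2:ℝ)^Q)⁻¹ * Real.sqrt ((2:ℝ)^Q) = Real.sqrt (((2:ℝ)^Q)⁻¹) := by
      rw [Real.sqrt_inv]
      nth_rewrite 1 [← Real.mul_self_sqrt hlamQ.le]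
      rw [mul_inv, mul_assoc, inv_mul_cancel₀ haQ.ne', mul_one]
    calc ((2:ℝ)^Q)⁻¹ * LinfNorm (fun x => ∑ pp ∈ Finset.Icc (-1 : ℤ) Q, ublock χ c pp x)
        ≤ ((2:ℝ)^Q)⁻¹ * (256 * Real.sqrt ((2:ℝ)^Q) * Real.sqrt S) :=
          mul_le_mul_of_nonneg_left hlinf (by positivity)
      _ = 256 * (((2:ℝ)^Q)⁻¹ * Real.sqrt ((2:ℝ)^Q)) * Real.sqrt S := by ring
      _ = 256 * Real.sqrt (((2:ℝ)^Q)⁻¹) * Real.sqrt S := by rw [haux]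
      _ ≤ 32768 * Real.sqrt (((2:ℝ)^Q)⁻¹) * Real.sqrt S := by
          have h1' : (0:ℝ) ≤ Real.sqrt (((2:ℝ)^Q)⁻¹) := Real.sqrt_nonneg _
          have h2' : (0:ℝ) ≤ Real.sqrt S := Real.sqrt_nonneg _
          nlinarith
      _ < cr * ν := hkey Q le_rfl
  · have h2T : 2*T = 2 * 32768^2 / cr^2 * (ν^2)⁻¹ * S := by
      rw [hTdef]
      field_simp
    linarith
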